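/- With η̃₀, …, η̃ₙ defined as below, the integrability condition holds: for all indices 0 ≤ i, j, k ≤ n, η̃_i·(∂η̃_k/∂z_j − ∂η̃_j/∂z_k) + η̃_j·(∂η̃_i/∂z_k − ∂η̃_k/∂z_i) + η̃_k·(∂η̃_j/∂z_i − ∂η̃_i/∂z_j) = 0 in ℂ[z₀,…,zₙ]. -/

import Mathlib

/-!
`η̃` is the pullback along `Φ = (F₀, F₁, F₂)` of the 1-form on `ℂ³`
`θ = α y z A(G) dx + β x z B(G) dy + γ x y C(G) dz`, where `G = (x^α, y^β, z^γ)`.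
Since `d` commutes with pullback, `η̃ ∧ dη̃ = Φ^*(θ ∧ dθ)`, and on `ℂ³` the 3-form `θ ∧ dθ` has a
single coefficient. After substituting `C = -A - B`, that coefficient is a combination of the
Euler identities of `A` and `B` evaluated at `G`, hence zero.
-/

open MvPolynomial

/-- The `j`-th coefficient of the 1-form
`η̃ = αF₁F₂(A∘F)dF₀ + βF₀F₂(B∘F)dF₁ + γF₀F₁(C∘F)dF₂`,
where `F = (F₀^α, F₁^β, F₂^γ)` and `∘F` denotes substitution of
`F₀^α, F₁^β, F₂^γ` for the three variables. -/
noncomputable def etaCoeff (n α β γ : ℕ) (A B Cp : MvPolynomial (Fin 3) ℂ)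
    (F0 F1 F2 : MvPolynomial (Fin (n + 1)) ℂ) (j : Fin (n + 1)) :
    MvPolynomial (Fin (n + 1)) ℂ :=
  (α : MvPolynomial (Fin (n + 1)) ℂ) * F1 * F2 *
      (aeval ![F0 ^ α, F1 ^ β, F2 ^ γ] A) * pderiv j F0 +
  (β : MvPolynomial (Fin (n + 1)) ℂ) * F0 * F2 *
      (aeval ![F0 ^ α, F1 ^ β, F2 ^ γ] B) * pderiv j F1 +
  (γ : MvPolynomial (Fin (n + 1)) ℂ) * F0 * F1 *
      (aeval ![F0 ^ α, F1 ^ β, F2 ^ γ] Cp) * pderiv j F2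

private theorem sum_sum_sum_rotate {ι M : Type*} [Fintype ι] [AddCommMonoid M]
    (f : ι → ι → ι → M) : ∑ l, ∑ p, ∑ q, f l p q = ∑ p, ∑ q, ∑ l, f l p q := by
  rw [Finset.sum_comm]
  exact Finset.sum_congr rfl fun _ _ => Finset.sum_comm

theorem Fin.three_alternating_eq_zero {M : Type*} [AddGroup M] {I : Fin 3 → Fin 3 → Fin 3 → M}
    (rotate : ∀ i j k, I j k i = I i j k) (swap : ∀ i j k, I j i k = -I i j k)
    (self_left : ∀ i k, I i i k = 0) (h : I 0 1 2 = 0) (l p q : Fin 3) : I l p q = 0 := by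
  have self_right (i k : Fin 3) : I i k k = 0 := by rw [← rotate]; exact self_left k i
  have self_outer (i k : Fin 3) : I i k i = 0 := by rw [rotate]; exact self_left i k
  have h' : I 1 0 2 = 0 := by rw [swap, h, neg_zero]
  fin_cases l <;> fin_cases p <;> fin_cases q <;>
    first
    | exact self_left _ _ | exact self_right _ _ | exact self_outer _ _ | exact h | exact h'
    | (rw [rotate]; first | exact h | exact h')
    | (rw [← rotate]; first | exact h | exact h')

namespace MvPolynomial

variable {σ τ R : Type*} [CommRing R]

theorem pderiv_pderiv_comm (i j : σ) (f : MvPolynomial σ R) :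
    pderiv i (pderiv j f) = pderiv j (pderiv i f) := by
  classical
  have h : ⁅pderiv i, pderiv j⁆ = (0 : Derivation R (MvPolynomial σ R) (MvPolynomial σ R)) :=
    derivation_ext fun m => by
      rw [Derivation.commutator_apply]
      simp [pderiv_X, Pi.single_apply, apply_ite]
  rw [← sub_eq_zero, ← Derivation.commutator_apply, h, Derivation.zero_apply]

theorem pderiv_aeval [Fintype τ] (v : τ → MvPolynomial σ R) (i : σ) (P : MvPolynomial τ R) :
    pderiv i (aeval v P) = ∑ m, aeval v (pderiv m P) * pderiv i (v m) := by
  classical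
  induction P using MvPolynomial.induction_on with
  | C a => simp [algebraMap_eq]
  | add p q hp hq => simp only [map_add, hp, hq, add_mul, Finset.sum_add_distrib]
  | mul_X p m hp =>
    simp only [map_mul, aeval_X, pderiv_mul, hp, pderiv_X, map_add, add_mul,
      Finset.sum_add_distrib, Finset.sum_mul, Pi.single_apply, mul_ite, mul_one, mul_zero,
      apply_ite (aeval v), ite_mul, map_zero, zero_mul, Finset.sum_ite_eq, Finset.mem_univ,
      if_true]
    simp only [mul_right_comm _ (v m)]

/-- The coefficient of `dz_i ∧ dz_j ∧ dz_k` in `η ∧ dη`, for `η = ∑ᵢ ηᵢ dzᵢ`. -/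
noncomputable def integrabilityCoeff (η : σ → MvPolynomial σ R) (i j k : σ) : MvPolynomial σ R :=
  η i * (pderiv j (η k) - pderiv k (η j)) + η j * (pderiv k (η i) - pderiv i (η k)) +
    η k * (pderiv i (η j) - pderiv j (η i))

theorem integrabilityCoeff_rotate (η : σ → MvPolynomial σ R) (i j k : σ) :
    integrabilityCoeff η j k i = integrabilityCoeff η i j k := by
  unfold integrabilityCoeff; ring

theorem integrabilityCoeff_swap (η : σ → MvPolynomial σ R) (i j k : σ) :
    integrabilityCoeff η j i k = -integrabilityCoeff η i j k := by
  unfold integrabilityCoeff; ring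

theorem integrabilityCoeff_self_left (η : σ → MvPolynomial σ R) (i k : σ) :
    integrabilityCoeff η i i k = 0 := by
  unfold integrabilityCoeff; ring

theorem integrabilityCoeff_eq_zero_of_fin_three {η : Fin 3 → MvPolynomial (Fin 3) R}
    (h : integrabilityCoeff η 0 1 2 = 0) (l p q : Fin 3) : integrabilityCoeff η l p q = 0 :=
  Fin.three_alternating_eq_zero (integrabilityCoeff_rotate η) (integrabilityCoeff_swap η)
    (integrabilityCoeff_self_left η) h l p q

noncomputable def pullbackOneForm [Fintype τ] (F : τ → MvPolynomial σ R)
    (θ : τ → MvPolynomial τ R) (j : σ) : MvPolynomial σ R :=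
  ∑ m, aeval F (θ m) * pderiv j (F m)

section Pullback

variable [Fintype τ]

theorem pderiv_pullbackOneForm_sub (F : τ → MvPolynomial σ R) (θ : τ → MvPolynomial τ R)
    (j k : σ) :
    pderiv j (pullbackOneForm F θ k) - pderiv k (pullbackOneForm F θ j) =
      ∑ p, ∑ q, aeval F (pderiv p (θ q) - pderiv q (θ p)) * (pderiv j (F p) * pderiv k (F q)) := by
  simp only [pullbackOneForm, map_sum, pderiv_mul, pderiv_aeval, pderiv_pderiv_comm j k,
    Finset.sum_add_distrib, map_sub, sub_mul, Finset.sum_sub_distrib, Finset.sum_mul]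
  rw [add_sub_add_right_eq_sub, Finset.sum_comm]
  refine congrArg₂ (· - ·) ?_ ?_ <;>
    exact Finset.sum_congr rfl fun _ _ => Finset.sum_congr rfl fun _ _ => by ring

theorem integrabilityCoeff_pullbackOneForm (F : τ → MvPolynomial σ R)
    (θ : τ → MvPolynomial τ R) (i j k : σ) :
    integrabilityCoeff (pullbackOneForm F θ) i j k =
      ∑ l, ∑ p, ∑ q, aeval F (integrabilityCoeff θ l p q) *
        (pderiv i (F l) * pderiv j (F p) * pderiv k (F q)) := by
  have wedge (a b c : σ) :
      pullbackOneForm F θ a *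
          (pderiv b (pullbackOneForm F θ c) - pderiv c (pullbackOneForm F θ b)) =
        ∑ l, ∑ p, ∑ q, aeval F (θ l * (pderiv p (θ q) - pderiv q (θ p))) *
          (pderiv a (F l) * pderiv b (F p) * pderiv c (F q)) := by
    rw [pderiv_pullbackOneForm_sub, pullbackOneForm, Finset.sum_mul]
    refine Finset.sum_congr rfl fun l _ => ?_
    simp only [Finset.mul_sum, map_mul]
    exact Finset.sum_congr rfl fun _ _ => Finset.sum_congr rfl fun _ _ => by ring
  simp only [integrabilityCoeff, wedge, map_add, add_mul, Finset.sum_add_distrib]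
  refine congrArg₂ (· + ·) (congrArg₂ (· + ·) rfl ?_) ?_
  · rw [← sum_sum_sum_rotate]
    exact Finset.sum_congr rfl fun _ _ => Finset.sum_congr rfl fun _ _ =>
      Finset.sum_congr rfl fun _ _ => by ring
  · rw [sum_sum_sum_rotate]
    exact Finset.sum_congr rfl fun _ _ => Finset.sum_congr rfl fun _ _ =>
      Finset.sum_congr rfl fun _ _ => by ring

theorem integrabilityCoeff_pullbackOneForm_eq_zero {θ : τ → MvPolynomial τ R}
    (hθ : ∀ l p q, integrabilityCoeff θ l p q = 0) (F : τ → MvPolynomial σ R) (i j k : σ) :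
    integrabilityCoeff (pullbackOneForm F θ) i j k = 0 := by
  simp [integrabilityCoeff_pullbackOneForm, hθ]

end Pullback

noncomputable def modelForm (α β γ : ℕ) (A B C : MvPolynomial (Fin 3) R) :
    Fin 3 → MvPolynomial (Fin 3) R :=
  ![(α : MvPolynomial (Fin 3) R) * X 1 * X 2 * aeval ![X 0 ^ α, X 1 ^ β, X 2 ^ γ] A,
    (β : MvPolynomial (Fin 3) R) * X 0 * X 2 * aeval ![X 0 ^ α, X 1 ^ β, X 2 ^ γ] B,
    (γ : MvPolynomial (Fin 3) R) * X 0 * X 1 * aeval ![X 0 ^ α, X 1 ^ β, X 2 ^ γ] C]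

theorem integrabilityCoeff_modelForm {α β γ N : ℕ} (hα : 0 < α) (hβ : 0 < β) (hγ : 0 < γ)
    {A B C : MvPolynomial (Fin 3) R} (hA : A.IsHomogeneous N) (hB : B.IsHomogeneous N)
    (hABC : A + B + C = 0) : integrabilityCoeff (modelForm α β γ A B C) 0 1 2 = 0 := by
  obtain rfl : C = -(A + B) := by linear_combination hABC
  -- so that `pderiv_pow` leaves no truncated exponent `α - 1`
  obtain ⟨α, rfl⟩ : ∃ k, α = k + 1 := ⟨α - 1, by omega⟩
  obtain ⟨β, rfl⟩ : ∃ k, β = k + 1 := ⟨β - 1, by omega⟩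
  obtain ⟨γ, rfl⟩ : ∃ k, γ = k + 1 := ⟨γ - 1, by omega⟩
  unfold integrabilityCoeff modelForm
  set G : Fin 3 → MvPolynomial (Fin 3) R := ![X 0 ^ (α + 1), X 1 ^ (β + 1), X 2 ^ (γ + 1)]
  have euler {P : MvPolynomial (Fin 3) R} (hP : P.IsHomogeneous N) :
      ∑ m, G m * aeval G (pderiv m P) = N * aeval G P := by
    simpa [G, nsmul_eq_mul] using congrArg (aeval G) hP.sum_X_mul_pderiv
  have eulerA := euler hA
  have eulerB := euler hB
  have hG0 : G 0 = X 0 ^ (α + 1) := rfl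
  have hG1 : G 1 = X 1 ^ (β + 1) := rfl
  have hG2 : G 2 = X 2 ^ (γ + 1) := rfl
  simp only [pderiv_mul, pderiv_aeval, Fin.sum_univ_three, map_neg, map_add, hG0, hG1, hG2,
    pderiv_pow, pderiv_X, Derivation.map_natCast, Pi.single_apply, Fin.reduceEq, ↓reduceIte,
    Nat.add_sub_cancel, Matrix.cons_val] at eulerA eulerB ⊢
  linear_combination ((α + 1 : ℕ) : MvPolynomial (Fin 3) R) * (β + 1 : ℕ) * (γ + 1 : ℕ) *
    X 0 * X 1 * X 2 * (aeval G B * eulerA - aeval G A * eulerB)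

end MvPolynomial

theorem etaCoeff_eq_pullbackOneForm (n α β γ : ℕ) (A B Cp : MvPolynomial (Fin 3) ℂ)
    (F0 F1 F2 : MvPolynomial (Fin (n + 1)) ℂ) :
    etaCoeff n α β γ A B Cp F0 F1 F2 =
      pullbackOneForm ![F0, F1, F2] (modelForm α β γ A B Cp) := by
  have subst (P : MvPolynomial (Fin 3) ℂ) :
      aeval ![F0, F1, F2] (aeval ![(X 0 : MvPolynomial (Fin 3) ℂ) ^ α, X 1 ^ β, X 2 ^ γ] P) =
        aeval ![F0 ^ α, F1 ^ β, F2 ^ γ] P := by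
    rw [comp_aeval_apply]
    congr 2
    funext m
    fin_cases m <;> simp
  funext j
  simp only [etaCoeff, pullbackOneForm, modelForm, Fin.sum_univ_three, map_mul, map_natCast,
    aeval_X, subst, Matrix.cons_val]

theorem stmt_4_general (n d α β γ : ℕ)
    (hα : 1 < α) (hαβ : α < β) (hβγ : β < γ)
    (A B Cp : MvPolynomial (Fin 3) ℂ)
    (hA : A.IsHomogeneous (d - 1)) (hB : B.IsHomogeneous (d - 1))
    (hABC : A + B + Cp = 0)
    (F0 F1 F2 : MvPolynomial (Fin (n + 1)) ℂ) :
    ∀ i j k : Fin (n + 1),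
      etaCoeff n α β γ A B Cp F0 F1 F2 i *
          (pderiv j (etaCoeff n α β γ A B Cp F0 F1 F2 k) -
            pderiv k (etaCoeff n α β γ A B Cp F0 F1 F2 j)) +
        etaCoeff n α β γ A B Cp F0 F1 F2 j *
          (pderiv k (etaCoeff n α β γ A B Cp F0 F1 F2 i) -
            pderiv i (etaCoeff n α β γ A B Cp F0 F1 F2 k)) +
        etaCoeff n α β γ A B Cp F0 F1 F2 k *
          (pderiv i (etaCoeff n α β γ A B Cp F0 F1 F2 j) -
            pderiv j (etaCoeff n α β γ A B Cp F0 F1 F2 i)) = 0 := by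
  intro i j k
  have model_integrable := integrabilityCoeff_eq_zero_of_fin_three
    (integrabilityCoeff_modelForm (α := α) (β := β) (γ := γ) (by omega) (by omega) (by omega)
      hA hB hABC)
  change integrabilityCoeff (etaCoeff n α β γ A B Cp F0 F1 F2) i j k = 0
  rw [etaCoeff_eq_pullbackOneForm]
  exact integrabilityCoeff_pullbackOneForm_eq_zero model_integrable ![F0, F1, F2] i j k

/-- the integrability condition `η̃ ∧ dη̃ = 0`, coefficientwise. -/
theorem stmt_4 (n d ν α β γ : ℕ) (hn : 3 ≤ n) (hd : 2 ≤ d) (hν : 2 ≤ ν)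
    (hα : 1 < α) (hαβ : α < β) (hβγ : β < γ)
    (A B Cp : MvPolynomial (Fin 3) ℂ)
    (hA : A.IsHomogeneous (d - 1)) (hB : B.IsHomogeneous (d - 1))
    (hC : Cp.IsHomogeneous (d - 1)) (hABC : A + B + Cp = 0)
    (F0 F1 F2 : MvPolynomial (Fin (n + 1)) ℂ) (a b c : ℕ)
    (hF0 : F0.IsHomogeneous a) (hF1 : F1.IsHomogeneous b) (hF2 : F2.IsHomogeneous c)
    (hνa : α * a = ν) (hνb : β * b = ν) (hνc : γ * c = ν) :
    ∀ i j k : Fin (n + 1),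
      etaCoeff n α β γ A B Cp F0 F1 F2 i *
          (pderiv j (etaCoeff n α β γ A B Cp F0 F1 F2 k) -
            pderiv k (etaCoeff n α β γ A B Cp F0 F1 F2 j)) +
        etaCoeff n α β γ A B Cp F0 F1 F2 j *
          (pderiv k (etaCoeff n α β γ A B Cp F0 F1 F2 i) -
            pderiv i (etaCoeff n α β γ A B Cp F0 F1 F2 k)) +
        etaCoeff n α β γ A B Cp F0 F1 F2 k *
          (pderiv i (etaCoeff n α β γ A B Cp F0 F1 F2 j) -
            pderiv j (etaCoeff n α β γ A B Cp F0 F1 F2 i)) = 0 :=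
  stmt_4_general n d α β γ hα hαβ hβγ A B Cp hA hB hABC F0 F1 F2
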